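/- arXiv:1802.04679 — 2 statements merged into one kernel-verified Lean document; each statement's English description precedes it below -/
import Mathlib

section
/- In the algebra R = K⟨x,y⟩/(x², y³, (x+y)³), for any scalars θ₁,...,θ₆ ∈ K, setting f = θ₁xy + θ₂yx + θ₃yy + θ₄xyx + θ₅xyy + θ₆yxy, one has (x + y + f)³ = (θ₁+θ₂−2θ₃)·xyxy + (3θ₄−2θ₅+θ₆+θ₁²−θ₁θ₂+θ₂²−θ₃²)·xyxyy. -/
noncomputable section

open FreeAlgebra

/-- The defining relations of `R(E₆) = K⟨x,y⟩/(x², y³, (x+y)³)`. -/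
inductive RRel (K : Type*) [Field K] :
    FreeAlgebra K (Fin 2) → FreeAlgebra K (Fin 2) → Prop
  | xx : RRel K (ι K (0 : Fin 2) * ι K 0) 0
  | yyy : RRel K (ι K (1 : Fin 2) * ι K 1 * ι K 1) 0
  | xy3 : RRel K ((ι K (0 : Fin 2) + ι K 1) ^ 3) 0

/-- `R(E₆) = K⟨x,y⟩/(x², y³, (x+y)³)`. -/
abbrev RE6 (K : Type*) [Field K] := RingQuot (RRel K)

/-- The image of `x` in `R(E₆)`. -/
def rx (K : Type*) [Field K] : RE6 K := RingQuot.mkAlgHom K (RRel K) (ι K 0)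

/-- The image of `y` in `R(E₆)`. -/
def ry (K : Type*) [Field K] : RE6 K := RingQuot.mkAlgHom K (RRel K) (ι K 1)

variable (K : Type*) [Field K]

set_option linter.unusedSectionVars false

section Reductions

variable {K}
variable [Field K]

local notation "X" => rx K
local notation "Y" => ry K

lemma re6_xx : X * X = 0 := by
  rw [rx, ← map_mul, RingQuot.mkAlgHom_rel K RRel.xx, map_zero]

lemma re6_yyy : Y * (Y * Y) = 0 := by
  rw [ry, ← map_mul, ← map_mul, ← mul_assoc,
    RingQuot.mkAlgHom_rel K RRel.yyy, map_zero]

lemma re6_cube : (X + Y) ^ 3 = 0 := by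
  rw [rx, ry, ← map_add, ← map_pow, RingQuot.mkAlgHom_rel K RRel.xy3, map_zero]

lemma re6_r1 (t : RE6 K) : X * (X * t) = 0 := by
  rw [← mul_assoc, re6_xx, zero_mul]

lemma re6_r2 (t : RE6 K) : Y * (Y * (Y * t)) = 0 := by
  linear_combination (norm := noncomm_ring) re6_yyy (K := K) * t

lemma re6_hrel (t : RE6 K) :
    X * (Y * (X * t)) + X * (Y * (Y * t)) + Y * (X * (Y * t))
      + Y * (Y * (X * t)) = 0 := by
  linear_combination (norm := noncomm_ring) re6_cube (K := K) * t
    - re6_xx (K := K) * (X * t) - re6_xx (K := K) * (Y * t)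
    - Y * re6_xx (K := K) * t - re6_yyy (K := K) * t

lemma re6_hrel' :
    X * (Y * X) + X * (Y * Y) + Y * (X * Y) + Y * (Y * X) = 0 := by
  linear_combination (norm := noncomm_ring) re6_cube (K := K)
    - re6_xx (K := K) * X - re6_xx (K := K) * Y
    - Y * re6_xx (K := K) - re6_yyy (K := K)

lemma re6_r3 (t : RE6 K) :
    X * (Y * (X * t)) =
      -(X * (Y * (Y * t)) + (Y * (X * (Y * t)) + Y * (Y * (X * t)))) := by
  linear_combination (norm := noncomm_ring) re6_hrel (K := K) t

lemma re6_r3' : X * (Y * X) = -(X * (Y * Y) + (Y * (X * Y) + Y * (Y * X))) := by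
  linear_combination (norm := noncomm_ring) re6_hrel' (K := K)

lemma re6_r4 (t : RE6 K) :
    X * (Y * (Y * (X * t))) =
      Y * (X * (Y * (Y * t))) + Y * (Y * (X * (Y * t))) := by
  linear_combination (norm := noncomm_ring) X * re6_hrel (K := K) t
    - re6_hrel (K := K) (Y * t)
    - re6_xx (K := K) * (Y * (X * t)) - re6_xx (K := K) * (Y * (Y * t))
    + X * re6_yyy (K := K) * t

lemma re6_r4' :
    X * (Y * (Y * X)) = Y * (X * (Y * Y)) + Y * (Y * (X * Y)) := by
  linear_combination (norm := noncomm_ring) X * re6_hrel' (K := K)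
    - re6_hrel (K := K) Y
    - re6_xx (K := K) * (Y * X) - re6_xx (K := K) * (Y * Y)
    + X * re6_yyy (K := K)

lemma re6_r5 (t : RE6 K) :
    Y * (X * (Y * (X * t))) =
      -(Y * (X * (Y * (Y * t))) + Y * (Y * (X * (Y * t)))) := by
  linear_combination (norm := noncomm_ring) Y * re6_hrel (K := K) t
    - re6_yyy (K := K) * (X * t)

lemma re6_r5' :
    Y * (X * (Y * X)) = -(Y * (X * (Y * Y)) + Y * (Y * (X * Y))) := by
  linear_combination (norm := noncomm_ring) Y * re6_hrel' (K := K)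
    - re6_yyy (K := K) * X

variable (K) in
lemma re6_neg (a : RE6 K) : -a = (-1 : K) • a := by module

end Reductions

set_option maxHeartbeats 1000000 in
variable {K} in
lemma re6_sq (θ₁ θ₂ θ₃ θ₄ θ₅ θ₆ : K) :
    (rx K + ry K + (θ₁ • (rx K * ry K) + θ₂ • (ry K * rx K) + θ₃ • (ry K * ry K)
        + θ₄ • (rx K * ry K * rx K) + θ₅ • (rx K * ry K * ry K)
        + θ₆ • (ry K * rx K * ry K)))
      * (rx K + ry K + (θ₁ • (rx K * ry K) + θ₂ • (ry K * rx K) + θ₃ • (ry K * ry K)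
        + θ₄ • (rx K * ry K * rx K) + θ₅ • (rx K * ry K * ry K)
        + θ₆ • (ry K * rx K * ry K)))
      = (rx K * ry K + ry K * rx K + ry K * ry K)
        + (θ₃ - θ₂) • (rx K * (ry K * ry K))
        + (θ₃ - θ₁) • (ry K * (ry K * rx K))
        + (θ₁*θ₂ + θ₂*θ₃ - θ₁^2 - θ₂^2 - 2*θ₄ + 2*θ₅ - θ₆) • (ry K * (rx K * (ry K * ry K)))
        + (θ₁*θ₂ + θ₁*θ₃ - θ₁^2 - θ₂^2 - 2*θ₄ + θ₅ - θ₆) • (ry K * (ry K * (rx K * ry K)))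
        + (θ₃*θ₅ - 2*θ₃*θ₄) • (ry K * (ry K * (rx K * (ry K * ry K)))) := by
  simp only [re6_neg, mul_add, add_mul, smul_mul_assoc, mul_smul_comm, smul_smul,
    smul_add, mul_assoc,
    re6_r1, re6_r2, re6_r3, re6_r4, re6_r5, re6_xx, re6_yyy, re6_r3', re6_r4', re6_r5',
    mul_zero, zero_mul, smul_zero, add_zero, zero_add]
  module

set_option maxHeartbeats 1000000 in
variable {K} in
lemma re6_cube_step (θ₁ θ₂ θ₃ θ₄ θ₅ θ₆ : K) :
    ((rx K * ry K + ry K * rx K + ry K * ry K)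
        + (θ₃ - θ₂) • (rx K * (ry K * ry K))
        + (θ₃ - θ₁) • (ry K * (ry K * rx K))
        + (θ₁*θ₂ + θ₂*θ₃ - θ₁^2 - θ₂^2 - 2*θ₄ + 2*θ₅ - θ₆) • (ry K * (rx K * (ry K * ry K)))
        + (θ₁*θ₂ + θ₁*θ₃ - θ₁^2 - θ₂^2 - 2*θ₄ + θ₅ - θ₆) • (ry K * (ry K * (rx K * ry K)))
        + (θ₃*θ₅ - 2*θ₃*θ₄) • (ry K * (ry K * (rx K * (ry K * ry K)))))
      * (rx K + ry K + (θ₁ • (rx K * ry K) + θ₂ • (ry K * rx K) + θ₃ • (ry K * ry K)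
        + θ₄ • (rx K * ry K * rx K) + θ₅ • (rx K * ry K * ry K)
        + θ₆ • (ry K * rx K * ry K)))
      = (θ₁ + θ₂ - 2*θ₃) • (rx K * ry K * rx K * ry K)
        + (3*θ₄ - 2*θ₅ + θ₆ + θ₁^2 - θ₁*θ₂ + θ₂^2 - θ₃^2)
            • (rx K * ry K * rx K * ry K * ry K) := by
  simp only [re6_neg, mul_add, add_mul, smul_mul_assoc, mul_smul_comm, smul_smul,
    smul_add, mul_assoc,
    re6_r1, re6_r2, re6_r3, re6_r4, re6_r5, re6_xx, re6_yyy, re6_r3', re6_r4', re6_r5',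
    mul_zero, zero_mul, smul_zero, add_zero, zero_add]
  module

set_option maxHeartbeats 1000000 in
theorem cube_formula [IsAlgClosed K] (θ₁ θ₂ θ₃ θ₄ θ₅ θ₆ : K) :
    letI x := rx K; letI y := ry K
    (x + y + (θ₁ • (x*y) + θ₂ • (y*x) + θ₃ • (y*y) + θ₄ • (x*y*x)
        + θ₅ • (x*y*y) + θ₆ • (y*x*y))) ^ 3
      = (θ₁ + θ₂ - 2*θ₃) • (x*y*x*y)
        + (3*θ₄ - 2*θ₅ + θ₆ + θ₁^2 - θ₁*θ₂ + θ₂^2 - θ₃^2) • (x*y*x*y*y) := by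
  show (rx K + ry K + _) ^ 3 = _
  rw [pow_succ, pow_two, re6_sq, re6_cube_step]
end
end

section
/- Let f = θ₁xy + θ₂yx + θ₃yy + θ₄xyx + θ₅xyy + θ₆yxy + θ₇xyxy + θ₈yxyy + θ₉xyxyy in R = K⟨x,y⟩/(x², y³, (x+y)³), with θᵢ ∈ K. Then (x + y + f)³ = 0 if and only if θ₁ + θ₂ − 2θ₃ = 0 and 3θ₄ − 2θ₅ + θ₆ + θ₁² − θ₁θ₂ + θ₂² − θ₃² = 0. -/
noncomputable section

open FreeAlgebra

variable (K : Type*) [Field K]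

lemma hxx : rx K * rx K = 0 := by
  have := RingQuot.mkAlgHom_rel K (RRel.xx (K := K))
  simpa [rx, map_mul] using this

lemma hxxt (t : RE6 K) : rx K * (rx K * t) = 0 := by
  rw [← mul_assoc, hxx, zero_mul]

lemma hyy3 : ry K * (ry K * ry K) = 0 := by
  have := RingQuot.mkAlgHom_rel K (RRel.yyy (K := K))
  simpa [ry, map_mul, mul_assoc] using this

lemma hyyt (t : RE6 K) : ry K * (ry K * (ry K * t)) = 0 := by
  rw [show ry K * (ry K * (ry K * t)) = (ry K * (ry K * ry K)) * t by
    simp [mul_assoc], hyy3, zero_mul]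

lemma hs3 : (rx K + ry K) ^ 3 = 0 := by
  have := RingQuot.mkAlgHom_rel K (RRel.xy3 (K := K))
  simpa [rx, ry, map_add, map_pow] using this

lemma hyyx : ry K * (ry K * rx K)
    = (-1 : K) • (rx K * (ry K * rx K)) + (-1 : K) • (rx K * (ry K * ry K))
      + (-1 : K) • (ry K * (rx K * ry K)) := by
  have h := hs3 K
  rw [pow_succ, pow_succ, pow_one] at h
  simp only [add_mul, mul_add, mul_assoc, hxx, hxxt, hyy3, hyyt, mul_zero, zero_mul,
    zero_add, add_zero] at h
  linear_combination (norm := module) h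

lemma hyyxt (t : RE6 K) : ry K * (ry K * (rx K * t))
    = (-1 : K) • (rx K * (ry K * (rx K * t))) + (-1 : K) • (rx K * (ry K * (ry K * t)))
      + (-1 : K) • (ry K * (rx K * (ry K * t))) := by
  have h1 : ry K * (ry K * (rx K * t)) = (ry K * (ry K * rx K)) * t := by
    simp [mul_assoc]
  rw [h1, hyyx]
  simp [add_mul, smul_mul_assoc, mul_assoc]

lemma hyxyx : ry K * (rx K * (ry K * rx K)) = rx K * (ry K * (rx K * ry K)) := by
  have h := hyyt K (rx K)
  rw [hyyx] at h
  simp only [mul_add, mul_smul_comm, hyyxt, hyy3, mul_zero, smul_zero, add_zero,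
    smul_add, smul_smul] at h
  linear_combination (norm := module) (-1 : K) • h

lemma hyxyxt (t : RE6 K) :
    ry K * (rx K * (ry K * (rx K * t))) = rx K * (ry K * (rx K * (ry K * t))) := by
  have h1 : ry K * (rx K * (ry K * (rx K * t))) = (ry K * (rx K * (ry K * rx K))) * t := by
    simp [mul_assoc]
  rw [h1, hyxyx]
  simp [mul_assoc]

set_option maxHeartbeats 4000000 in
lemma main (θ₁ θ₂ θ₃ θ₄ θ₅ θ₆ θ₇ θ₈ θ₉ : K) :
    (rx K + ry K + (θ₁ • (rx K * ry K) + θ₂ • (ry K * rx K) + θ₃ • (ry K * ry K)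
      + θ₄ • (rx K * ry K * rx K) + θ₅ • (rx K * ry K * ry K) + θ₆ • (ry K * rx K * ry K)
      + θ₇ • (rx K * ry K * rx K * ry K) + θ₈ • (ry K * rx K * ry K * ry K)
      + θ₉ • (rx K * ry K * rx K * ry K * ry K))) ^ 3
    = (θ₁ + θ₂ - 2*θ₃) • (rx K * (ry K * (rx K * ry K)))
      + (3*θ₄ - 2*θ₅ + θ₆ + θ₁^2 - θ₁*θ₂ + θ₂^2 - θ₃^2)
          • (rx K * (ry K * (rx K * (ry K * ry K)))) := by
  rw [pow_succ, pow_succ, pow_one]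
  simp only [mul_add, add_mul, smul_mul_assoc, mul_smul_comm, smul_smul, smul_add,
    mul_assoc, hxx, hxxt, hyy3, hyyt, hyyx, hyyxt, hyxyx, hyxyxt,
    mul_zero, zero_mul, smul_zero, add_zero, zero_add]
  match_scalars <;> ring

def Mx : Matrix (Fin 12) (Fin 12) ℤ :=
  !![0, 0, 0, 0, 0, 0, 0, 0, 0, 0, 0, 0;
   1, 0, 0, 0, 0, 0, 0, 0, 0, 0, 0, 0;
   0, 0, 0, 0, 0, 0, 0, 0, 0, 0, 0, 0;
   0, 0, 1, 0, 0, 0, 0, 0, 0, 0, 0, 0;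
   0, 0, 0, 0, 0, 0, 0, 0, 0, 0, 0, 0;
   0, 0, 0, 0, 0, 0, 0, 0, 0, 0, 0, 0;
   0, 0, 0, 0, 1, 0, 0, 0, 0, 0, 0, 0;
   0, 0, 0, 0, 0, 1, 0, 0, 0, 0, 0, 0;
   0, 0, 0, 0, 0, 0, 0, 0, 0, 0, 0, 0;
   0, 0, 0, 0, 0, 0, 0, 0, 1, 0, 0, 0;
   0, 0, 0, 0, 0, 0, 0, 0, 0, 0, 0, 0;
   0, 0, 0, 0, 0, 0, 0, 0, 0, 0, 1, 0]

def My : Matrix (Fin 12) (Fin 12) ℤ :=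
  !![0, 0, 0, 0, 0, 0, 0, 0, 0, 0, 0, 0;
   0, 0, 0, 0, 0, 0, 0, 0, 0, 0, 0, 0;
   1, 0, 0, 0, 0, 0, 0, 0, 0, 0, 0, 0;
   0, 0, 0, 0, 0, 0, 0, 0, 0, 0, 0, 0;
   0, 1, 0, 0, 0, 0, 0, 0, 0, 0, 0, 0;
   0, 0, 1, 0, 0, 0, 0, 0, 0, 0, 0, 0;
   0, 0, 0, 0, -1, 0, 0, 0, 0, 0, 0, 0;
   0, 0, 0, 0, -1, 0, 0, 0, 0, 0, 0, 0;
   0, 0, 0, 1, -1, 0, 0, 0, 0, 0, 0, 0;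
   0, 0, 0, 0, 0, 0, 1, 0, -1, 0, 0, 0;
   0, 0, 0, 0, 0, 0, 0, 1, -1, 0, 0, 0;
   0, 0, 0, 0, 0, 0, 0, 0, 0, 1, -1, 0]

def XX : Matrix (Fin 12) (Fin 12) K := (Int.castRingHom K).mapMatrix Mx
def YY : Matrix (Fin 12) (Fin 12) K := (Int.castRingHom K).mapMatrix My

lemma relXX : XX K * XX K = 0 := by
  rw [XX, ← map_mul, show Mx * Mx = 0 by decide, map_zero]

lemma relYY : YY K * YY K * YY K = 0 := by
  rw [YY, ← map_mul, ← map_mul, show My * My * My = 0 by decide, map_zero]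

lemma relS : (XX K + YY K) ^ 3 = 0 := by
  rw [XX, YY, ← map_add, ← map_pow, show (Mx + My) ^ 3 = 0 by decide, map_zero]

def φ : RE6 K →ₐ[K] Matrix (Fin 12) (Fin 12) K :=
  RingQuot.liftAlgHom K ⟨FreeAlgebra.lift K ![XX K, YY K], by
    rintro a b (_ | _ | _) <;>
      simp only [map_mul, map_add, map_pow, map_zero, FreeAlgebra.lift_ι_apply,
        Matrix.cons_val_zero, Matrix.cons_val_one, Matrix.head_cons]
    · exact relXX K
    · exact relYY K
    · exact relS K⟩

lemma phix : φ K (rx K) = XX K := by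
  rw [rx, φ, RingQuot.liftAlgHom_mkAlgHom_apply, FreeAlgebra.lift_ι_apply]
  simp

lemma phiy : φ K (ry K) = YY K := by
  rw [ry, φ, RingQuot.liftAlgHom_mkAlgHom_apply, FreeAlgebra.lift_ι_apply]
  simp

lemma entry4 : ∀ i j, (XX K * (YY K * (XX K * YY K))) i j
    = ((Mx * (My * (Mx * My))) i j : ℤ) := by
  intro i j
  rw [XX, YY, ← map_mul, ← map_mul, ← map_mul]
  simp [RingHom.mapMatrix_apply, Matrix.map_apply]

lemma entry5 : ∀ i j, (XX K * (YY K * (XX K * (YY K * YY K)))) i j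
    = ((Mx * (My * (Mx * (My * My)))) i j : ℤ) := by
  intro i j
  rw [XX, YY, ← map_mul, ← map_mul, ← map_mul, ← map_mul]
  simp [RingHom.mapMatrix_apply, Matrix.map_apply]

theorem admissible_iff [IsAlgClosed K] (θ₁ θ₂ θ₃ θ₄ θ₅ θ₆ θ₇ θ₈ θ₉ : K) :
    letI x := rx K; letI y := ry K
    letI f := θ₁ • (x*y) + θ₂ • (y*x) + θ₃ • (y*y) + θ₄ • (x*y*x)
        + θ₅ • (x*y*y) + θ₆ • (y*x*y) + θ₇ • (x*y*x*y) + θ₈ • (y*x*y*y)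
        + θ₉ • (x*y*x*y*y)
    ((x + y + f) ^ 3 = 0 ↔
      θ₁ + θ₂ - 2*θ₃ = 0 ∧
      3*θ₄ - 2*θ₅ + θ₆ + θ₁^2 - θ₁*θ₂ + θ₂^2 - θ₃^2 = 0) := by
  rw [main K θ₁ θ₂ θ₃ θ₄ θ₅ θ₆ θ₇ θ₈ θ₉]
  constructor
  · intro h
    have h2 := congrArg (φ K) h
    simp only [map_add, map_smul, map_mul, map_zero, phix, phiy] at h2
    constructor
    · have e := congrFun (congrFun h2 9) 0
      simp only [Matrix.add_apply, Matrix.smul_apply, smul_eq_mul, Matrix.zero_apply,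
        entry4, entry5, show (Mx * (My * (Mx * My))) 9 0 = 1 by decide,
        show (Mx * (My * (Mx * (My * My)))) 9 0 = 0 by decide] at e
      push_cast at e
      linear_combination e
    · have e := congrFun (congrFun h2 11) 0
      simp only [Matrix.add_apply, Matrix.smul_apply, smul_eq_mul, Matrix.zero_apply,
        entry4, entry5, show (Mx * (My * (Mx * My))) 11 0 = 0 by decide,
        show (Mx * (My * (Mx * (My * My)))) 11 0 = 1 by decide] at e
      push_cast at e
      linear_combination e
  · rintro ⟨h1, h2⟩
    rw [h1, h2]
    simp
end
end
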